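/- Independent amalgamation preserves symmetry: if in the amalgamation of a span W₁ ← V → W₂ of bilinear monomorphisms all three bilinear forms are symmetric, the amalgam U can be chosen with a symmetric bilinear form. -/

import Mathlib

/-! Write each `Wᵢ` as `V × Cᵢ`, with `Cᵢ` a complement of the range of `fᵢ`, and take
`U = V × C₁ × C₂` with `[u, u'] = B₁(p₁ u, p₁ u') + B₂(p₂ u, p₂ u') - BV(u.1, u'.1)`, where
`pᵢ : U → V × Cᵢ` are the projections. On the copy of `W₁` the `B₂`-summand only sees the
`V`-component, where it equals `BV` and is cancelled by the correction term; symmetrically for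
`W₂`. Each summand is symmetric, and the two copies meet exactly in `V` because the
`Cᵢ`-components are independent. -/

universe u

open Function LinearMap

theorem LinearMap.exists_prodEquiv_of_injective {K V W : Type*} [DivisionRing K]
    [AddCommGroup V] [Module K V] [AddCommGroup W] [Module K W]
    {f : V →ₗ[K] W} (hf : Injective f) :
    ∃ (C : Submodule K W) (e : (V × C) ≃ₗ[K] W), ∀ v, e (v, 0) = f v := by
  obtain ⟨C, hC⟩ := (range f).exists_isCompl
  refine ⟨C, ((LinearEquiv.ofInjective f hf).prodCongr (LinearEquiv.refl K C)).trans
    (Submodule.prodEquivOfIsCompl _ _ hC), fun v => ?_⟩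
  simp

section Amalgam

variable {R M V C₁ C₂ : Type*} [CommRing R] [AddCommGroup M] [Module R M]
  [AddCommGroup V] [Module R V] [AddCommGroup C₁] [Module R C₁] [AddCommGroup C₂] [Module R C₂]

variable (R) in
def amalgamInl : V × C₁ →ₗ[R] V × C₁ × C₂ := prodMap id (inl R C₁ C₂)

variable (R) in
def amalgamInr : V × C₂ →ₗ[R] V × C₁ × C₂ := prodMap id (inr R C₁ C₂)

@[simp]
theorem amalgamInl_apply (x : V × C₁) : (amalgamInl R x : V × C₁ × C₂) = (x.1, x.2, 0) := rfl

@[simp]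
theorem amalgamInr_apply (x : V × C₂) : (amalgamInr R x : V × C₁ × C₂) = (x.1, 0, x.2) := rfl

theorem amalgamInl_injective : Injective (amalgamInl R : V × C₁ →ₗ[R] V × C₁ × C₂) :=
  fun x y h => by simpa [Prod.ext_iff] using h

theorem amalgamInr_injective : Injective (amalgamInr R : V × C₂ →ₗ[R] V × C₁ × C₂) :=
  fun x y h => by simpa [Prod.ext_iff] using h

theorem amalgamInl_comp_inl :
    (amalgamInl R : V × C₁ →ₗ[R] V × C₁ × C₂) ∘ₗ inl R V C₁ = amalgamInr R ∘ₗ inl R V C₂ := by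
  ext <;> simp

theorem range_amalgamInl_inf_range_amalgamInr :
    range (amalgamInl R : V × C₁ →ₗ[R] V × C₁ × C₂) ⊓ range (amalgamInr R) =
      range (amalgamInl R ∘ₗ inl R V C₁) := by
  ext ⟨v, c₁, c₂⟩
  simp only [Submodule.mem_inf, mem_range, LinearMap.comp_apply, LinearMap.inl_apply,
    amalgamInl_apply, amalgamInr_apply, Prod.exists, Prod.mk.injEq]
  constructor
  · rintro ⟨⟨_, _, _, _, hc₂⟩, ⟨_, _, _, hc₁, _⟩⟩
    exact ⟨v, rfl, hc₁, hc₂⟩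
  · rintro ⟨v', rfl, rfl, rfl⟩
    exact ⟨⟨v', 0, rfl, rfl, rfl⟩, ⟨v', 0, rfl, rfl, rfl⟩⟩

def amalgamForm (BV : V →ₗ[R] V →ₗ[R] M) (B₁ : V × C₁ →ₗ[R] V × C₁ →ₗ[R] M)
    (B₂ : V × C₂ →ₗ[R] V × C₂ →ₗ[R] M) : V × C₁ × C₂ →ₗ[R] V × C₁ × C₂ →ₗ[R] M :=
  let p₁ : V × C₁ × C₂ →ₗ[R] V × C₁ := prodMap id (fst R C₁ C₂)
  let p₂ : V × C₁ × C₂ →ₗ[R] V × C₂ := prodMap id (snd R C₁ C₂)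
  B₁.compl₁₂ p₁ p₁ + B₂.compl₁₂ p₂ p₂ - BV.compl₁₂ (fst R V _) (fst R V _)

variable (BV : V →ₗ[R] V →ₗ[R] M) (B₁ : V × C₁ →ₗ[R] V × C₁ →ₗ[R] M)
  (B₂ : V × C₂ →ₗ[R] V × C₂ →ₗ[R] M)

theorem amalgamForm_apply (u u' : V × C₁ × C₂) :
    amalgamForm BV B₁ B₂ u u' =
      B₁ (u.1, u.2.1) (u'.1, u'.2.1) + B₂ (u.1, u.2.2) (u'.1, u'.2.2) - BV u.1 u'.1 :=
  rfl

theorem amalgamForm_comm (hVs : ∀ x y, BV x y = BV y x) (h₁s : ∀ x y, B₁ x y = B₁ y x)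
    (h₂s : ∀ x y, B₂ x y = B₂ y x) (u u' : V × C₁ × C₂) :
    amalgamForm BV B₁ B₂ u u' = amalgamForm BV B₁ B₂ u' u := by
  rw [amalgamForm_apply, amalgamForm_apply, hVs, h₁s, h₂s]

theorem amalgamForm_amalgamInl (h₂ : ∀ v v', B₂ (v, 0) (v', 0) = BV v v') (x y : V × C₁) :
    amalgamForm BV B₁ B₂ (amalgamInl R x) (amalgamInl R y) = B₁ x y := by
  simp [amalgamForm_apply, h₂]

theorem amalgamForm_amalgamInr (h₁ : ∀ v v', B₁ (v, 0) (v', 0) = BV v v') (x y : V × C₂) :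
    amalgamForm BV B₁ B₂ (amalgamInr R x) (amalgamInr R y) = B₂ x y := by
  simp [amalgamForm_apply, h₁]

end Amalgam

theorem bilinear_independent_amalgamation_symm {K : Type u} [Field K]
    (V W₁ W₂ : Type u) [AddCommGroup V] [Module K V]
    [AddCommGroup W₁] [Module K W₁] [AddCommGroup W₂] [Module K W₂]
    (BV : V →ₗ[K] V →ₗ[K] K) (B₁ : W₁ →ₗ[K] W₁ →ₗ[K] K) (B₂ : W₂ →ₗ[K] W₂ →ₗ[K] K)
    (hVs : ∀ x y : V, BV x y = BV y x) (h₁s : ∀ x y : W₁, B₁ x y = B₁ y x)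
    (h₂s : ∀ x y : W₂, B₂ x y = B₂ y x)
    (f₁ : V →ₗ[K] W₁) (f₂ : V →ₗ[K] W₂)
    (hf₁ : Function.Injective f₁) (hf₁b : ∀ x y : V, B₁ (f₁ x) (f₁ y) = BV x y)
    (hf₂ : Function.Injective f₂) (hf₂b : ∀ x y : V, B₂ (f₂ x) (f₂ y) = BV x y) :
    ∃ (U : Type u) (_ : AddCommGroup U) (_ : Module K U)
      (BU : U →ₗ[K] U →ₗ[K] K) (g₁ : W₁ →ₗ[K] U) (g₂ : W₂ →ₗ[K] U),
      (∀ x y : U, BU x y = BU y x) ∧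
      Function.Injective g₁ ∧ (∀ x y : W₁, BU (g₁ x) (g₁ y) = B₁ x y) ∧
      Function.Injective g₂ ∧ (∀ x y : W₂, BU (g₂ x) (g₂ y) = B₂ x y) ∧
      g₁ ∘ₗ f₁ = g₂ ∘ₗ f₂ ∧
      LinearMap.range g₁ ⊓ LinearMap.range g₂ = LinearMap.range (g₁ ∘ₗ f₁) := by
  obtain ⟨C₁, e₁, he₁⟩ := exists_prodEquiv_of_injective hf₁
  obtain ⟨C₂, e₂, he₂⟩ := exists_prodEquiv_of_injective hf₂
  have hg₁ : (amalgamInl K ∘ₗ e₁.symm.toLinearMap) ∘ₗ f₁ =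
      (amalgamInl K ∘ₗ inl K V C₁ : V →ₗ[K] V × C₁ × C₂) :=
    LinearMap.ext fun v => by simp [e₁.symm_apply_eq.mpr (he₁ v).symm]
  have hg₂ : (amalgamInr K ∘ₗ e₂.symm.toLinearMap) ∘ₗ f₂ =
      (amalgamInr K ∘ₗ inl K V C₂ : V →ₗ[K] V × C₁ × C₂) :=
    LinearMap.ext fun v => by simp [e₂.symm_apply_eq.mpr (he₂ v).symm]
  have hB₁ : ∀ v v', B₁.compl₁₂ e₁.toLinearMap e₁.toLinearMap (v, 0) (v', 0) = BV v v' :=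
    fun v v' => by rw [compl₁₂_apply, LinearEquiv.coe_coe, he₁, he₁, hf₁b]
  have hB₂ : ∀ v v', B₂.compl₁₂ e₂.toLinearMap e₂.toLinearMap (v, 0) (v', 0) = BV v v' :=
    fun v v' => by rw [compl₁₂_apply, LinearEquiv.coe_coe, he₂, he₂, hf₂b]
  refine ⟨V × C₁ × C₂, inferInstance, inferInstance,
    amalgamForm BV (B₁.compl₁₂ e₁ e₁) (B₂.compl₁₂ e₂ e₂),
    amalgamInl K ∘ₗ e₁.symm.toLinearMap, amalgamInr K ∘ₗ e₂.symm.toLinearMap,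
    amalgamForm_comm _ _ _ hVs (fun _ _ => h₁s _ _) (fun _ _ => h₂s _ _),
    amalgamInl_injective.comp e₁.symm.injective, fun x y => ?_,
    amalgamInr_injective.comp e₂.symm.injective, fun x y => ?_, ?_, ?_⟩
  · simp only [LinearMap.comp_apply, amalgamForm_amalgamInl _ _ _ hB₂, compl₁₂_apply,
      LinearEquiv.coe_coe, LinearEquiv.apply_symm_apply]
  · simp only [LinearMap.comp_apply, amalgamForm_amalgamInr _ _ _ hB₁, compl₁₂_apply,
      LinearEquiv.coe_coe, LinearEquiv.apply_symm_apply]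
  · rw [hg₁, hg₂, amalgamInl_comp_inl]
  · rw [range_comp_of_range_eq_top _ e₁.symm.range, range_comp_of_range_eq_top _ e₂.symm.range,
      hg₁, range_amalgamInl_inf_range_amalgamInr]
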